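/- arXiv:1905.09301 — 3 statements merged into one kernel-verified Lean document; each statement's English description precedes it below -/
import Mathlib

section
/- Importance sampling, differentiable densities: in the importance-sampling setting, suppose the index set T is a bounded subset of ℝ^m equipped with a norm ‖·‖, T_c is an open set containing the convex hull of T, and p_{T_c} : ℝ × T_c → ℝ is a Borel measurable map with p_{T_c}(·, t) = p_t for every t ∈ T, differentiable with respect to its second argument t on all of T_c. If there exists a Borel measurable map F : ℝ → ℝ with ∫_ℝ |f(x)| F(x) dx < +∞ such that ‖∇_t p_{T_c}(x, t)‖ ≤ F(x) for all x ∈ ℝ and all t ∈ T_c, then the importance-sampling estimator Ê̲_n^{𝒫/P}(f) is a strongly consistent estimator of E̲^𝒫(f). -/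
open MeasureTheory Filter Topology ProbabilityTheory
open scoped ENNReal

noncomputable section

/-- The positive part of an extended real number, as an element of `ℝ≥0∞`. -/
def epos (x : EReal) : ℝ≥0∞ := if x = ⊤ then ⊤ else ENNReal.ofReal x.toReal

/-- The (possibly infinite) expectation `E(g) = ∫ g⁺ − ∫ g⁻` of an extended-real map. -/
def eExp {Ω : Type*} [MeasurableSpace Ω] (μ : Measure Ω) (g : Ω → EReal) : EReal :=
  ((∫⁻ ω, epos (g ω) ∂μ : ℝ≥0∞) : EReal) - ((∫⁻ ω, epos (-(g ω)) ∂μ : ℝ≥0∞) : EReal)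

/-- `E(g)` exists: at least one of `E(g⁺)`, `E(g⁻)` is finite. -/
def eExpExists {Ω : Type*} [MeasurableSpace Ω] (μ : Measure Ω) (g : Ω → EReal) : Prop :=
  (∫⁻ ω, epos (g ω) ∂μ) ≠ ⊤ ∨ (∫⁻ ω, epos (-(g ω)) ∂μ) ≠ ⊤

/-- Outer expectation of an arbitrary extended-real map: the infimum of `E(g)` over all
measurable `g ≥ h` whose expectation exists. -/
def outerExp {Ω : Type*} [MeasurableSpace Ω] (μ : Measure Ω) (h : Ω → EReal) : EReal :=
  sInf {y : EReal | ∃ g : Ω → EReal,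
    Measurable g ∧ (∀ ω, h ω ≤ g ω) ∧ eExpExists μ g ∧ eExp μ g = y}

/-- Inner expectation of an arbitrary extended-real map. -/
def innerExp {Ω : Type*} [MeasurableSpace Ω] (μ : Measure Ω) (h : Ω → EReal) : EReal :=
  - outerExp μ (fun ω => - h ω)

/-- `g` is a minimal measurable cover of `h` w.r.t. `μ`: it is measurable, dominates `h`
pointwise, and is a.s. below any measurable map dominating `h` pointwise. -/
def IsMinMeasCover {Ω : Type*} [MeasurableSpace Ω] (μ : Measure Ω) (h g : Ω → EReal) : Prop :=
  Measurable g ∧ (∀ ω, h ω ≤ g ω) ∧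
    ∀ g' : Ω → EReal, Measurable g' → (∀ ω, h ω ≤ g' ω) → ∀ᵐ ω ∂μ, g ω ≤ g' ω

/-- Absolute value on extended reals. -/
def eabs (x : EReal) : EReal := max x (-x)

/-!
Write `g_t = f p_t / p` for the importance-weighted integrand, so that `E^{P_t} f = E^P g_t` and
the estimator is the infimum over `t` of the empirical means of `g_t`. The mean value inequality
on the convex hull of `T` gives `|g_t - g_s| ≤ L ‖t - s‖` with `L = |f| F / p`, which is
`P`-integrable. Along a sample path the empirical means are therefore Lipschitz in `t`, with
constant the empirical mean of `L`; by the strong law this constant converges, hence is bounded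
in `n`, and `t ↦ E^P g_t` is `E^P L`-Lipschitz. The strong law on a countable dense subset of the
totally bounded set `T` then upgrades, by equi-Lipschitz continuity, to uniform convergence on
`T`, so the infima converge. The same density argument makes the infimum over `T` measurable, so
`|Ê_n - E̲|` is its own minimal measurable cover.
-/

open Set

theorem tendsto_ciInf_of_tendstoUniformly {X ι : Type*} [Nonempty X] {l : Filter ι}
    {F : ι → X → ℝ} {a : X → ℝ} (h : TendstoUniformly F a l) (ha : BddBelow (range a)) :
    Tendsto (fun i => ⨅ x, F i x) l (𝓝 (⨅ x, a x)) := by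
  rw [Metric.tendsto_nhds]
  intro ε hε
  filter_upwards [Metric.tendstoUniformly_iff.1 h (ε / 2) (half_pos hε)] with i hi
  have hclose : ∀ x, |F i x - a x| < ε / 2 := fun x => by
    rw [← Real.dist_eq, dist_comm]; exact hi x
  have hFbdd : BddBelow (range (F i)) := by
    obtain ⟨c, hc⟩ := ha
    refine ⟨c - ε / 2, ?_⟩
    rintro _ ⟨x, rfl⟩
    linarith [hc ⟨x, rfl⟩, (abs_lt.1 (hclose x)).1]
  have hlow : (⨅ x, a x) - ε / 2 ≤ ⨅ x, F i x :=
    le_ciInf fun x => by linarith [ciInf_le ha x, (abs_lt.1 (hclose x)).1]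
  have hup : (⨅ x, F i x) - ε / 2 ≤ ⨅ x, a x :=
    le_ciInf fun x => by linarith [ciInf_le hFbdd x, (abs_lt.1 (hclose x)).2]
  rw [Real.dist_eq, abs_lt]
  constructor <;> linarith

theorem tendstoUniformly_of_lipschitzWith_of_dense {X ι : Type*} [PseudoMetricSpace X]
    (hX : TotallyBounded (univ : Set X)) {D : Set X} (hD : Dense D) {l : Filter ι}
    {K K' : NNReal} {F : ι → X → ℝ} {a : X → ℝ} (hF : ∀ i, LipschitzWith K (F i))
    (ha : LipschitzWith K' a) (hlim : ∀ x ∈ D, Tendsto (fun i => F i x) l (𝓝 (a x))) :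
    TendstoUniformly F a l := by
  rw [Metric.tendstoUniformly_iff]
  intro ε hε
  obtain ⟨δ, hδ, hKδ⟩ := exists_pos_mul_lt (div_pos hε (by norm_num : (0 : ℝ) < 3)) (K + K')
  obtain ⟨net, hnetD, hnet, hcover⟩ :=
    Metric.finite_approx_of_totallyBounded (hX.subset (subset_univ D)) (δ / 2) (half_pos hδ)
  have hnear : ∀ x, ∃ y ∈ net, dist x y < δ := fun x => by
    obtain ⟨d, hdD, hxd⟩ := hD.exists_dist_lt x (half_pos hδ)
    obtain ⟨y, hy, hdy⟩ := mem_iUnion₂.1 (hcover hdD)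
    exact ⟨y, hy, by linarith [dist_triangle x d y, Metric.mem_ball.1 hdy]⟩
  filter_upwards [(eventually_all_finite hnet).2 fun y hy =>
    Metric.tendsto_nhds.1 (hlim y (hnetD hy)) (ε / 3) (by positivity)] with i hi x
  obtain ⟨y, hy, hxy⟩ := hnear x
  have hax := ha.dist_le_mul_of_le hxy.le
  have hFx := (hF i).dist_le_mul_of_le (dist_comm x y ▸ hxy.le)
  have hKδ' : (K : ℝ) * δ + K' * δ < ε / 3 := by linarith [add_mul (K : ℝ) K' δ]
  linarith [dist_triangle4 (a x) (a y) (F i y) (F i x), dist_comm (a y) (F i y), hi y hy]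

def StronglyConsistent {Ω : Type*} [MeasurableSpace Ω] (μ : Measure Ω) (est : ℕ → Ω → EReal)
    (target : EReal) : Prop :=
  ∃ H : ℕ → Ω → EReal, (∀ n, IsMinMeasCover μ (fun ω => eabs (est n ω - target)) (H n)) ∧
    ∀ᵐ ω ∂μ, Tendsto (fun n => H n ω) atTop (𝓝 0)

theorem isMinMeasCover_self {Ω : Type*} [MeasurableSpace Ω] (μ : Measure Ω) {h : Ω → EReal}
    (hh : Measurable h) : IsMinMeasCover μ h h :=
  ⟨hh, fun _ => le_rfl, fun _ _ hg => ae_of_all _ hg⟩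

theorem eabs_coe (x : ℝ) : eabs (x : EReal) = ((|x| : ℝ) : EReal) := by
  rw [eabs, ← EReal.coe_neg, abs_eq_max_neg]
  exact (EReal.coe_strictMono.monotone.map_max).symm

theorem EReal.coe_ciInf {ι : Sort*} [Nonempty ι] {u : ι → ℝ} (hu : BddBelow (range u)) :
    ((⨅ i, u i : ℝ) : EReal) = ⨅ i, (u i : EReal) :=
  Monotone.map_ciInf_of_continuousAt continuous_coe_real_ereal.continuousAt
    (fun _ _ => EReal.coe_le_coe_iff.2) hu

theorem stronglyConsistent_coe_of_tendsto {Ω : Type*} [MeasurableSpace Ω] {μ : Measure Ω}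
    {est : ℕ → Ω → ℝ} {c : ℝ} (hm : ∀ n, Measurable (est n))
    (h : ∀ᵐ ω ∂μ, Tendsto (fun n => est n ω) atTop (𝓝 c)) :
    StronglyConsistent μ (fun n ω => (est n ω : EReal)) c := by
  have heq : ∀ n ω, eabs ((est n ω : EReal) - c) = ((|est n ω - c| : ℝ) : EReal) := fun n ω => by
    rw [← EReal.coe_sub, eabs_coe]
  refine ⟨fun n ω => ((|est n ω - c| : ℝ) : EReal), fun n => ?_, ?_⟩
  · simp only [heq]
    exact isMinMeasCover_self μ (measurable_coe_real_ereal.comp ((hm n).sub_const c).abs)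
  · filter_upwards [h] with ω hω
    simpa using EReal.tendsto_coe.2 ((hω.sub_const c).abs)

def empiricalMean {α : Type*} (n : ℕ) (q : α → ℝ) (ω : ℕ → α) : ℝ :=
  (n : ℝ)⁻¹ * ∑ k ∈ Finset.range n, q (ω k)

section EmpiricalMean

variable {α : Type*} [MeasurableSpace α]

theorem measurable_empiricalMean (n : ℕ) {q : α → ℝ} (hq : Measurable q) :
    Measurable (empiricalMean n q) :=
  measurable_const.mul (Finset.measurable_sum _ fun k _ => hq.comp (measurable_pi_apply k))

omit [MeasurableSpace α] in
theorem abs_empiricalMean_sub_le {n : ℕ} {q r L : α → ℝ} {c : ℝ}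
    (h : ∀ x, |q x - r x| ≤ L x * c) (ω : ℕ → α) :
    |empiricalMean n q ω - empiricalMean n r ω| ≤ empiricalMean n L ω * c := by
  unfold empiricalMean
  rw [← mul_sub, ← Finset.sum_sub_distrib, abs_mul, abs_of_nonneg (by positivity), mul_assoc,
    Finset.sum_mul]
  gcongr
  exact (Finset.abs_sum_le_sum_abs _ _).trans (Finset.sum_le_sum fun k _ => h (ω k))

theorem ae_tendsto_empiricalMean {P : Measure α} {μ : Measure (ℕ → α)}
    (hmap : ∀ k, μ.map (fun ω => ω k) = P) (hind : iIndepFun (fun k (ω : ℕ → α) => ω k) μ)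
    {q : α → ℝ} (hqm : Measurable q) (hqi : Integrable q P) :
    ∀ᵐ ω ∂μ, Tendsto (fun n => empiricalMean n q ω) atTop (𝓝 (∫ x, q x ∂P)) := by
  have hY : ∀ k, Measurable fun ω : ℕ → α => q (ω k) := fun k => hqm.comp (measurable_pi_apply k)
  have hlaw : ∀ k, μ.map (fun ω : ℕ → α => q (ω k)) = P.map q := fun k => by
    rw [← hmap k, Measure.map_map hqm (measurable_pi_apply k)]; rfl
  have hident : ∀ k, IdentDistrib (fun ω : ℕ → α => q (ω k)) (fun ω => q (ω 0)) μ μ := fun k =>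
    ⟨(hY k).aemeasurable, (hY 0).aemeasurable, by rw [hlaw, hlaw]⟩
  have hint : Integrable (fun ω : ℕ → α => q (ω 0)) μ := by
    rw [← hmap 0] at hqi
    exact hqi.comp_measurable (measurable_pi_apply 0)
  have hmean : ∫ ω, q (ω 0) ∂μ = ∫ x, q x ∂P := by
    rw [← hmap 0, integral_map (measurable_pi_apply 0).aemeasurable
      (by rw [hmap]; exact hqi.aestronglyMeasurable)]
  filter_upwards [strong_law_ae_real (fun k (ω : ℕ → α) => q (ω k)) hint
    (fun i j hij => (hind.indepFun hij).comp hqm hqm) hident] with ω hω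
  simpa only [empiricalMean, hmean, div_eq_inv_mul] using hω

end EmpiricalMean

theorem bddBelow_range_of_lipschitzWith {X : Type*} [PseudoMetricSpace X]
    (hX : TotallyBounded (univ : Set X)) {K : NNReal} {f : X → ℝ} (hf : LipschitzWith K f) :
    BddBelow (range f) := by
  simpa only [image_univ] using (hf.isBounded_image hX.isBounded).bddBelow

section UniformStrongLaw

variable {α X : Type*} [MeasurableSpace α] [PseudoMetricSpace X] {g : X → α → ℝ} {L : α → ℝ}

omit [MeasurableSpace α] in
theorem lipschitzWith_empiricalMean (hgL : ∀ s t x, |g t x - g s x| ≤ L x * dist t s)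
    (n : ℕ) (ω : ℕ → α) :
    LipschitzWith (Real.toNNReal (empiricalMean n L ω)) fun t => empiricalMean n (g t) ω :=
  LipschitzWith.of_dist_le' fun t s => abs_empiricalMean_sub_le (hgL s t) ω

theorem lipschitzWith_integral {P : Measure α} (hgi : ∀ t, Integrable (g t) P)
    (hLi : Integrable L P) (hgL : ∀ s t x, |g t x - g s x| ≤ L x * dist t s) :
    LipschitzWith (Real.toNNReal (∫ x, L x ∂P)) fun t => ∫ x, g t x ∂P := by
  refine LipschitzWith.of_dist_le' fun t s => ?_
  rw [Real.dist_eq, ← integral_sub (hgi t) (hgi s), ← integral_mul_const]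
  exact (abs_integral_le_integral_abs).trans
    (integral_mono ((hgi t).sub (hgi s)).abs (hLi.mul_const _) (hgL s t))

variable (hX : TotallyBounded (univ : Set X)) (hgL : ∀ s t x, |g t x - g s x| ≤ L x * dist t s)
include hX hgL

theorem measurable_iInf_empiricalMean (hgm : ∀ t, Measurable (g t)) (n : ℕ) :
    Measurable fun ω : ℕ → α => ⨅ t, empiricalMean n (g t) ω := by
  obtain ⟨D, hDc, hD⟩ := hX.isSeparable
  replace hD : Dense D := fun t => hD (mem_univ t)
  have := hDc.to_subtype
  have hinf : ∀ ω : ℕ → α, ⨅ t, empiricalMean n (g t) ω = ⨅ t : D, empiricalMean n (g t) ω :=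
    fun ω => (hD.ciInf (lipschitzWith_empiricalMean hgL n ω).continuous
      (bddBelow_range_of_lipschitzWith hX (lipschitzWith_empiricalMean hgL n ω))).symm
  simp only [hinf]
  exact Measurable.iInf fun t => measurable_empiricalMean n (hgm t)

theorem ae_tendsto_iInf_empiricalMean [Nonempty X] {P : Measure α} {μ : Measure (ℕ → α)}
    (hmap : ∀ k, μ.map (fun ω => ω k) = P) (hind : iIndepFun (fun k (ω : ℕ → α) => ω k) μ)
    (hgm : ∀ t, Measurable (g t)) (hgi : ∀ t, Integrable (g t) P)
    (hLm : Measurable L) (hLi : Integrable L P) :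
    ∀ᵐ ω ∂μ, Tendsto (fun n => ⨅ t, empiricalMean n (g t) ω) atTop
      (𝓝 (⨅ t, ∫ x, g t x ∂P)) := by
  obtain ⟨D, hDc, hD⟩ := hX.isSeparable
  replace hD : Dense D := fun t => hD (mem_univ t)
  have hlimD : ∀ᵐ ω ∂μ, ∀ t ∈ D,
      Tendsto (fun n => empiricalMean n (g t) ω) atTop (𝓝 (∫ x, g t x ∂P)) :=
    (ae_ball_iff hDc).2 fun t _ => ae_tendsto_empiricalMean hmap hind (hgm t) (hgi t)
  filter_upwards [hlimD, ae_tendsto_empiricalMean hmap hind hLm hLi] with ω hω hLω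
  obtain ⟨C, hC⟩ := hLω.bddAbove_range
  have hlip : ∀ n, LipschitzWith (Real.toNNReal C) fun t => empiricalMean n (g t) ω :=
    fun n => (lipschitzWith_empiricalMean hgL n ω).weaken
      (Real.toNNReal_le_toNNReal (hC ⟨n, rfl⟩))
  have ha := lipschitzWith_integral hgi hLi hgL
  exact tendsto_ciInf_of_tendstoUniformly
    (tendstoUniformly_of_lipschitzWith_of_dense hX hD hlip ha hω)
    (bddBelow_range_of_lipschitzWith hX ha)

theorem stronglyConsistent_iInf_empiricalMean [Nonempty X] {P : Measure α}
    {μ : Measure (ℕ → α)} (hmap : ∀ k, μ.map (fun ω => ω k) = P)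
    (hind : iIndepFun (fun k (ω : ℕ → α) => ω k) μ) (hgm : ∀ t, Measurable (g t))
    (hgi : ∀ t, Integrable (g t) P) (hLm : Measurable L) (hLi : Integrable L P) :
    StronglyConsistent μ (fun n ω => ⨅ t, (empiricalMean n (g t) ω : EReal))
      (⨅ t, ((∫ x, g t x ∂P : ℝ) : EReal)) := by
  have hest : ∀ n ω, ⨅ t, (empiricalMean n (g t) ω : EReal) =
      ((⨅ t, empiricalMean n (g t) ω : ℝ) : EReal) := fun n ω =>
    (EReal.coe_ciInf
      (bddBelow_range_of_lipschitzWith hX (lipschitzWith_empiricalMean hgL n ω))).symm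
  have htarget : ⨅ t, ((∫ x, g t x ∂P : ℝ) : EReal) = ((⨅ t, ∫ x, g t x ∂P : ℝ) : EReal) :=
    (EReal.coe_ciInf (bddBelow_range_of_lipschitzWith hX (lipschitzWith_integral hgi hLi hgL))).symm
  simp only [hest, htarget]
  exact stronglyConsistent_coe_of_tendsto (measurable_iInf_empiricalMean hX hgL hgm)
    (ae_tendsto_iInf_empiricalMean hX hgL hmap hind hgm hgi hLm hLi)

end UniformStrongLaw

theorem Convex.abs_sub_le_of_norm_hasGradientAt_le {E : Type*} [NormedAddCommGroup E]
    [InnerProductSpace ℝ E] [CompleteSpace E] {φ : E → ℝ} {φ' : E → E} {s : Set E} {C : ℝ}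
    (hs : Convex ℝ s) (hφ : ∀ u ∈ s, HasGradientAt φ (φ' u) u) (hC : ∀ u ∈ s, ‖φ' u‖ ≤ C)
    {x y : E} (hx : x ∈ s) (hy : y ∈ s) : |φ y - φ x| ≤ C * ‖y - x‖ := by
  simpa only [Real.norm_eq_abs] using hs.norm_image_sub_le_of_norm_hasFDerivWithin_le
    (fun u hu => (hφ u hu).hasFDerivAt.hasFDerivWithinAt)
    (fun u hu => by simpa only [LinearIsometryEquiv.norm_map] using hC u hu) hx hy

theorem abs_mul_div_sub_mul_div_le {a b c d C : ℝ} (hd : 0 ≤ d) (h : |a - b| ≤ C) :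
    |c * a / d - c * b / d| ≤ |c| * C / d := by
  rw [← sub_div, ← mul_sub, abs_div, abs_mul, abs_of_nonneg hd]
  exact div_le_div_of_nonneg_right (mul_le_mul_of_nonneg_left h (abs_nonneg _)) hd

theorem Bornology.IsBounded.totallyBounded_univ {E : Type*} [PseudoMetricSpace E] [ProperSpace E]
    {T : Set E} (hT : Bornology.IsBounded T) : TotallyBounded (univ : Set T) := by
  simpa using totallyBounded_preimage (isUniformInducing_val T)
    (hT.isCompact_closure.totallyBounded.subset subset_closure)

section WithDensity

variable {α : Type*} [MeasurableSpace α] {μ : Measure α} {p : α → ℝ}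

theorem integral_withDensity_ofReal (hp : Measurable p) (hp0 : ∀ x, 0 ≤ p x) (q : α → ℝ) :
    ∫ x, q x ∂μ.withDensity (fun x => ENNReal.ofReal (p x)) = ∫ x, p x * q x ∂μ := by
  rw [integral_withDensity_eq_integral_toReal_smul hp.ennreal_ofReal
    (ae_of_all _ fun _ => ENNReal.ofReal_lt_top)]
  simp only [ENNReal.toReal_ofReal (hp0 _), smul_eq_mul]

theorem integrable_withDensity_ofReal_iff (hp : Measurable p) (hp0 : ∀ x, 0 ≤ p x)
    {q : α → ℝ} :
    Integrable q (μ.withDensity fun x => ENNReal.ofReal (p x)) ↔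
      Integrable (fun x => p x * q x) μ := by
  rw [integrable_withDensity_iff_integrable_smul' hp.ennreal_ofReal
    (ae_of_all _ fun _ => ENNReal.ofReal_lt_top)]
  simp only [ENNReal.toReal_ofReal (hp0 _), smul_eq_mul]

theorem mul_mul_div_eq_of_ne_zero_imp {a b c : ℝ} (h : b ≠ 0 → a ≠ 0) :
    a * (c * b / a) = b * c := by
  rcases eq_or_ne a 0 with rfl | ha
  · rw [not_imp_not.1 h rfl]; simp
  · field_simp

theorem integrable_div_withDensity_ofReal (hp : Measurable p) (hp0 : ∀ x, 0 ≤ p x) {h : α → ℝ}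
    (hm : Measurable h) (h0 : ∀ x, 0 ≤ h x) (hi : Integrable h μ) :
    Integrable (fun x => h x / p x) (μ.withDensity fun x => ENNReal.ofReal (p x)) := by
  rw [integrable_withDensity_ofReal_iff hp hp0]
  refine hi.mono' (hp.mul (hm.div hp)).aestronglyMeasurable (ae_of_all _ fun x => ?_)
  rcases eq_or_ne (p x) 0 with hx | hx
  · simp [hx, h0 x]
  · rw [mul_div_cancel₀ _ hx, Real.norm_of_nonneg (h0 x)]

variable {q : α → ℝ} (hp : Measurable p) (hp0 : ∀ x, 0 ≤ p x) (hq : Measurable q)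
  (hq0 : ∀ x, 0 ≤ q x) (hsupp : ∀ x, q x ≠ 0 → p x ≠ 0)
include hp hp0 hq hq0 hsupp

theorem integral_withDensity_ofReal_eq_integral_mul_div (f : α → ℝ) :
    ∫ x, f x ∂μ.withDensity (fun x => ENNReal.ofReal (q x)) =
      ∫ x, f x * q x / p x ∂μ.withDensity (fun x => ENNReal.ofReal (p x)) := by
  simp only [integral_withDensity_ofReal hp hp0, integral_withDensity_ofReal hq hq0,
    mul_mul_div_eq_of_ne_zero_imp (hsupp _)]

theorem integrable_mul_div_withDensity_ofReal {f : α → ℝ}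
    (hf : Integrable f (μ.withDensity fun x => ENNReal.ofReal (q x))) :
    Integrable (fun x => f x * q x / p x) (μ.withDensity fun x => ENNReal.ofReal (p x)) := by
  rw [integrable_withDensity_ofReal_iff hq hq0] at hf
  rw [integrable_withDensity_ofReal_iff hp hp0]
  simpa only [mul_mul_div_eq_of_ne_zero_imp (hsupp _)] using hf

end WithDensity

theorem importance_sampling_differentiable_consistency_general
    {m : ℕ}
    (T Tc : Set (EuclideanSpace ℝ (Fin m))) (hTne : T.Nonempty)
    (hTbdd : Bornology.IsBounded T)
    (hhull : convexHull ℝ T ⊆ Tc)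
    (p : ℝ → ℝ) (hpm : Measurable p) (hp0 : ∀ x, 0 ≤ p x)
    (P : Measure ℝ) (hP : P = volume.withDensity (fun x => ENNReal.ofReal (p x)))
    (pt : EuclideanSpace ℝ (Fin m) → ℝ → ℝ)
    (hptm : ∀ t ∈ T, Measurable (pt t)) (hpt0 : ∀ t ∈ T, ∀ x, 0 ≤ pt t x)
    (Pt : EuclideanSpace ℝ (Fin m) → Measure ℝ)
    (hPt : ∀ t ∈ T, Pt t = volume.withDensity (fun x => ENNReal.ofReal (pt t x)))
    (hsupp : ∀ t ∈ T, ∀ x, pt t x ≠ 0 → p x ≠ 0)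
    (f : ℝ → ℝ) (hf : Measurable f)
    (hfint : ∀ t ∈ T, Integrable f (Pt t))
    -- the measurable extension `p_{T_c}` and its gradient in the parameter
    (pTc : ℝ → EuclideanSpace ℝ (Fin m) → ℝ)
    (hagree : ∀ t ∈ T, ∀ x : ℝ, pTc x t = pt t x)
    (D : ℝ → EuclideanSpace ℝ (Fin m) → EuclideanSpace ℝ (Fin m))
    (hdiff : ∀ x : ℝ, ∀ t ∈ Tc, HasGradientAt (fun s => pTc x s) (D x t) t)
    (F : ℝ → ℝ) (hFm : Measurable F)
    (hfF : ∫⁻ x, ENNReal.ofReal (|f x| * F x) ≠ ⊤)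
    (hgrad : ∀ x : ℝ, ∀ t ∈ Tc, ‖D x t‖ ≤ F x)
    (μ : Measure (ℕ → ℝ))
    (hmap : ∀ k : ℕ, μ.map (fun ω => ω k) = P)
    (hind : iIndepFun
      (fun k (ω : ℕ → ℝ) => ω k) μ) :
    ∃ H : ℕ → (ℕ → ℝ) → EReal,
      (∀ n : ℕ, IsMinMeasCover μ
        (fun ω => eabs ((⨅ t : T, (((n : ℝ)⁻¹ *
            ∑ k ∈ Finset.range n, f (ω k) * pt t (ω k) / p (ω k) : ℝ) : EReal)) -
          ⨅ t : T, ((∫ x, f x ∂(Pt t) : ℝ) : EReal))) (H n)) ∧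
      ∀ᵐ ω ∂μ, Tendsto (fun n : ℕ => H n ω) atTop (𝓝 (0 : EReal)) := by
  obtain ⟨t₀, ht₀⟩ := hTne
  have : Nonempty T := ⟨⟨t₀, ht₀⟩⟩
  have hfF0 : ∀ x, 0 ≤ |f x| * F x := fun x => mul_nonneg (abs_nonneg _)
    ((norm_nonneg _).trans (hgrad x t₀ (hhull (subset_convexHull ℝ T ht₀))))
  have hgL : ∀ (s t : T) x, |f x * pt t x / p x - f x * pt s x / p x| ≤
      |f x| * F x / p x * dist t s := fun s t x => by
    have hmvt := (convex_convexHull ℝ T).abs_sub_le_of_norm_hasGradientAt_le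
      (fun u hu => hdiff x u (hhull hu)) (fun u hu => hgrad x u (hhull hu))
      (subset_convexHull ℝ T s.2) (subset_convexHull ℝ T t.2)
    rw [hagree t t.2, hagree s s.2, ← dist_eq_norm, ← Subtype.dist_eq] at hmvt
    exact (abs_mul_div_sub_mul_div_le (hp0 x) hmvt).trans_eq (by ring)
  have hmean : ∀ t : T, ∫ x, f x ∂Pt t = ∫ x, f x * pt t x / p x ∂P := fun t => by
    rw [hPt t t.2, hP]
    exact integral_withDensity_ofReal_eq_integral_mul_div hpm hp0 (hptm t t.2) (hpt0 t t.2)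
      (hsupp t t.2) f
  have hgi : ∀ t : T, Integrable (fun x => f x * pt t x / p x) P := fun t => by
    rw [hP]
    exact integrable_mul_div_withDensity_ofReal hpm hp0 (hptm t t.2) (hpt0 t t.2)
      (hsupp t t.2) (hPt t t.2 ▸ hfint t t.2)
  have hLi : Integrable (fun x => |f x| * F x / p x) P := by
    rw [hP]
    exact integrable_div_withDensity_ofReal hpm hp0 (hf.abs.mul hFm) hfF0
      ((lintegral_ofReal_ne_top_iff_integrable (hf.abs.mul hFm).aestronglyMeasurable
        (ae_of_all _ hfF0)).1 hfF)
  have key := stronglyConsistent_iInf_empiricalMean hTbdd.totallyBounded_univ hgL hmap hind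
    (fun t => (hf.mul (hptm t t.2)).div hpm) hgi ((hf.abs.mul hFm).div hpm) hLi
  simp only [← hmean] at key
  exact key

/-- **Importance sampling, differentiable densities.** In the
importance-sampling setting, suppose `T ⊆ ℝ^m` is bounded, `T_c` is an open set containing
the convex hull of `T`, and `p_{T_c} : ℝ × T_c → ℝ` is a Borel measurable extension of the
densities `(p_t)_{t∈T}`, differentiable in its second argument on `T_c`, with gradient
bounded by a Borel measurable `F : ℝ → ℝ` satisfying `∫ |f| F dx < +∞`. Then the
importance-sampling estimator `Ê̲_n^{𝒫/P}(f)` is a strongly consistent estimator of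
`E̲^𝒫(f)`. -/
theorem importance_sampling_differentiable_consistency
    {m : ℕ}
    (T Tc : Set (EuclideanSpace ℝ (Fin m))) (hTne : T.Nonempty)
    (hTbdd : Bornology.IsBounded T)
    (hTc : IsOpen Tc) (hhull : convexHull ℝ T ⊆ Tc)
    (p : ℝ → ℝ) (hpm : Measurable p) (hp0 : ∀ x, 0 ≤ p x)
    (P : Measure ℝ) (hP : P = volume.withDensity (fun x => ENNReal.ofReal (p x)))
    [IsProbabilityMeasure P]
    (pt : EuclideanSpace ℝ (Fin m) → ℝ → ℝ)
    (hptm : ∀ t ∈ T, Measurable (pt t)) (hpt0 : ∀ t ∈ T, ∀ x, 0 ≤ pt t x)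
    (Pt : EuclideanSpace ℝ (Fin m) → Measure ℝ)
    (hPt : ∀ t ∈ T, Pt t = volume.withDensity (fun x => ENNReal.ofReal (pt t x)))
    (hPtprob : ∀ t ∈ T, IsProbabilityMeasure (Pt t))
    (hsupp : ∀ t ∈ T, ∀ x, pt t x ≠ 0 → p x ≠ 0)
    (f : ℝ → ℝ) (hf : Measurable f)
    (hfint : ∀ t ∈ T, Integrable f (Pt t))
    (hsup : BddAbove ((fun t => ∫ x, |f x| ∂(Pt t)) '' T))
    -- the measurable extension `p_{T_c}` and its gradient in the parameter
    (pTc : ℝ → EuclideanSpace ℝ (Fin m) → ℝ)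
    (hpTcm : Measurable (fun q : ℝ × EuclideanSpace ℝ (Fin m) => pTc q.1 q.2))
    (hagree : ∀ t ∈ T, ∀ x : ℝ, pTc x t = pt t x)
    (D : ℝ → EuclideanSpace ℝ (Fin m) → EuclideanSpace ℝ (Fin m))
    (hdiff : ∀ x : ℝ, ∀ t ∈ Tc, HasGradientAt (fun s => pTc x s) (D x t) t)
    (F : ℝ → ℝ) (hFm : Measurable F)
    (hfF : ∫⁻ x, ENNReal.ofReal (|f x| * F x) ≠ ⊤)
    (hgrad : ∀ x : ℝ, ∀ t ∈ Tc, ‖D x t‖ ≤ F x)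
    (μ : Measure (ℕ → ℝ)) [IsProbabilityMeasure μ]
    (hmap : ∀ k : ℕ, μ.map (fun ω => ω k) = P)
    (hind : iIndepFun
      (fun k (ω : ℕ → ℝ) => ω k) μ) :
    ∃ H : ℕ → (ℕ → ℝ) → EReal,
      (∀ n : ℕ, IsMinMeasCover μ
        (fun ω => eabs ((⨅ t : T, (((n : ℝ)⁻¹ *
            ∑ k ∈ Finset.range n, f (ω k) * pt t (ω k) / p (ω k) : ℝ) : EReal)) -
          ⨅ t : T, ((∫ x, f x ∂(Pt t) : ℝ) : EReal))) (H n)) ∧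
      ∀ᵐ ω ∂μ, Tendsto (fun n : ℕ => H n ω) atTop (𝓝 (0 : EReal)) :=
  importance_sampling_differentiable_consistency_general T Tc hTne hTbdd hhull p hpm hp0 P hP pt
    hptm hpt0 Pt hPt hsupp f hf hfint pTc hagree D hdiff F hFm hfF hgrad μ hmap hind
end
end

section
/- Let μ̲ ≤ μ̄ be real numbers and 0 < σ̲ ≤ σ̄. Then the integral over ℝ of the pointwise supremum of Gaussian densities with parameters in the rectangle [μ̲, μ̄] × [σ̲, σ̄] is finite, and more precisely ∫_ℝ sup_{(μ,σ) ∈ [μ̲,μ̄]×[σ̲,σ̄]} (1/(√(2π) σ)) exp(−(x−μ)²/(2σ²)) dx ≤ (1/σ̲) (σ̄ + (μ̄ − μ̲)/√(2π)). -/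
open MeasureTheory Real Set
open scoped ENNReal

noncomputable section

private lemma gauss_shift_Iic (b c : ℝ) :
    ∫ x in Set.Iic c, Real.exp (-b * (x - c) ^ 2) =
      ∫ x in Set.Ioi (0 : ℝ), Real.exp (-b * x ^ 2) := by
  have A : MeasurableEmbedding (fun x : ℝ => x + c) :=
    (Homeomorph.addRight c).measurableEmbedding
  have h := A.setIntegral_map (μ := volume)
    (fun x => Real.exp (-b * (x - c) ^ 2)) (Set.Iic c)
  rw [map_add_right_eq_self] at h
  have hpre : (fun x : ℝ => x + c) ⁻¹' Set.Iic c = Set.Iic 0 := by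
    ext x; simp
  rw [hpre] at h
  simp only [add_sub_cancel_right] at h
  rw [h]
  have h2 := integral_comp_neg_Iic (0 : ℝ) (fun x => Real.exp (-b * x ^ 2))
  simp only [neg_zero, neg_sq] at h2
  exact h2

private lemma gauss_shift_Ioi (b c : ℝ) :
    ∫ x in Set.Ioi c, Real.exp (-b * (x - c) ^ 2) =
      ∫ x in Set.Ioi (0 : ℝ), Real.exp (-b * x ^ 2) := by
  have A : MeasurableEmbedding (fun x : ℝ => x + c) :=
    (Homeomorph.addRight c).measurableEmbedding
  have h := A.setIntegral_map (μ := volume)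
    (fun x => Real.exp (-b * (x - c) ^ 2)) (Set.Ioi c)
  rw [map_add_right_eq_self] at h
  have hpre : (fun x : ℝ => x + c) ⁻¹' Set.Ioi c = Set.Ioi 0 := by
    ext x; simp
  rw [hpre] at h
  simpa only [add_sub_cancel_right] using h

private lemma term_le (σl σu x μ σ : ℝ) (hσl : 0 < σl) (h1 : σl ≤ σ) (h2 : σ ≤ σu)
    {d : ℝ} (hd : 0 ≤ d) (hdle : d ≤ (x - μ) ^ 2) :
    (Real.sqrt (2 * π) * σ)⁻¹ * Real.exp (-(x - μ) ^ 2 / (2 * σ ^ 2)) ≤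
      (Real.sqrt (2 * π) * σl)⁻¹ * Real.exp (-d / (2 * σu ^ 2)) := by
  have hs : 0 < Real.sqrt (2 * π) := Real.sqrt_pos.mpr (by positivity)
  have hσ : 0 < σ := hσl.trans_le h1
  have hσu : 0 < σu := hσl.trans_le (h1.trans h2)
  have hinv : (Real.sqrt (2 * π) * σ)⁻¹ ≤ (Real.sqrt (2 * π) * σl)⁻¹ := by
    apply inv_anti₀ (by positivity)
    exact mul_le_mul_of_nonneg_left h1 hs.le
  have hexp : Real.exp (-(x - μ) ^ 2 / (2 * σ ^ 2)) ≤ Real.exp (-d / (2 * σu ^ 2)) := by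
    apply Real.exp_le_exp.mpr
    rw [neg_div, neg_div, neg_le_neg_iff]
    rw [div_le_div_iff₀ (by positivity) (by positivity)]
    nlinarith [mul_le_mul hdle (by nlinarith : 2 * σ ^ 2 ≤ 2 * σu ^ 2) (by positivity) (sq_nonneg (x - μ))]
  exact mul_le_mul hinv hexp (Real.exp_pos _).le (by positivity)

/-- For `μ̲ ≤ μ̄` and `0 < σ̲ ≤ σ̄`, the Lebesgue integral over `ℝ` of the
pointwise supremum of the Gaussian densities with parameters `(μ, σ)` in the rectangle
`[μ̲, μ̄] × [σ̲, σ̄]` is finite; more precisely, it is at most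
`(1/σ̲)(σ̄ + (μ̄ − μ̲)/√(2π))`. -/
theorem lintegral_sup_gaussian_density_le
    (μl μu σl σu : ℝ) (hμ : μl ≤ μu) (hσl : 0 < σl) (hσ : σl ≤ σu) :
    ∫⁻ x : ℝ, ENNReal.ofReal
        (⨆ q : (Set.Icc μl μu ×ˢ Set.Icc σl σu : Set (ℝ × ℝ)),
          (Real.sqrt (2 * π) * q.1.2)⁻¹ *
            Real.exp (-(x - q.1.1) ^ 2 / (2 * q.1.2 ^ 2))) ≤
      ENNReal.ofReal ((1 / σl) * (σu + (μu - μl) / Real.sqrt (2 * π))) := by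
  have hσu : 0 < σu := hσl.trans_le hσ
  have hs : 0 < Real.sqrt (2 * π) := Real.sqrt_pos.mpr (by positivity)
  set c : ℝ := (Real.sqrt (2 * π) * σl)⁻¹ with hc
  have hcpos : 0 < c := by positivity
  set b : ℝ := (2 * σu ^ 2)⁻¹ with hb
  have hbpos : 0 < b := by positivity
  haveI : Nonempty (Set.Icc μl μu ×ˢ Set.Icc σl σu : Set (ℝ × ℝ)) :=
    ⟨⟨(μl, σl), ⟨⟨le_refl _, hμ⟩, ⟨le_refl _, hσ⟩⟩⟩⟩
  set F : ℝ → ℝ≥0∞ := fun x => ENNReal.ofReal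
        (⨆ q : (Set.Icc μl μu ×ˢ Set.Icc σl σu : Set (ℝ × ℝ)),
          (Real.sqrt (2 * π) * q.1.2)⁻¹ *
            Real.exp (-(x - q.1.1) ^ 2 / (2 * q.1.2 ^ 2))) with hF
  -- pointwise bounds
  have key : ∀ (x d : ℝ), 0 ≤ d → (∀ μ σ, (μ, σ) ∈ (Set.Icc μl μu ×ˢ Set.Icc σl σu : Set (ℝ × ℝ)) →
      d ≤ (x - μ) ^ 2) → F x ≤ ENNReal.ofReal (c * Real.exp (-b * d)) := by
    intro x d hd hdle
    apply ENNReal.ofReal_le_ofReal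
    apply ciSup_le
    rintro ⟨⟨μ, σ⟩, hq⟩
    have := term_le σl σu x μ σ hσl hq.2.1 hq.2.2 hd (hdle μ σ hq)
    calc (Real.sqrt (2 * π) * σ)⁻¹ * Real.exp (-(x - μ) ^ 2 / (2 * σ ^ 2))
        ≤ (Real.sqrt (2 * π) * σl)⁻¹ * Real.exp (-d / (2 * σu ^ 2)) := this
      _ = c * Real.exp (-b * d) := by rw [hc, hb]; ring_nf
  -- split the integral
  have hIio : MeasurableSet (Set.Iio μl) := measurableSet_Iio
  have split1 := lintegral_add_compl F hIio (μ := volume)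
  rw [compl_Iio] at split1
  have hIci : Set.Ici μl = Set.Icc μl μu ∪ Set.Ioi μu := by
    rw [Set.Icc_union_Ioi_eq_Ici hμ]
  have hdisj : Disjoint (Set.Icc μl μu) (Set.Ioi μu) :=
    (Set.Iic_disjoint_Ioi le_rfl).mono_left Set.Icc_subset_Iic_self
  have split2 : ∫⁻ x in Set.Ici μl, F x =
      (∫⁻ x in Set.Icc μl μu, F x) + ∫⁻ x in Set.Ioi μu, F x := by
    rw [hIci, lintegral_union measurableSet_Ioi hdisj]
  -- bound on the left tail
  have bd1 : ∫⁻ x in Set.Iio μl, F x ≤ ENNReal.ofReal (c * (Real.sqrt (2 * π) * σu / 2)) := by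
    have hmono : ∫⁻ x in Set.Iio μl, F x ≤
        ∫⁻ x in Set.Iio μl, ENNReal.ofReal (c * Real.exp (-b * (x - μl) ^ 2)) := by
      apply setLIntegral_mono (by fun_prop)
      intro x hx
      apply key x ((x - μl) ^ 2) (sq_nonneg _)
      rintro μ σ hq
      have h1 : μl ≤ μ := hq.1.1
      have hx' : x < μl := hx
      nlinarith
    refine hmono.trans ?_
    have hint : Integrable (fun x : ℝ => c * Real.exp (-b * (x - μl) ^ 2)) volume :=
      ((integrable_exp_neg_mul_sq hbpos).comp_sub_right μl).const_mul c
    rw [← ofReal_integral_eq_lintegral_ofReal hint.integrableOn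
      (Filter.Eventually.of_forall fun x => by positivity)]
    apply ENNReal.ofReal_le_ofReal
    rw [MeasureTheory.integral_const_mul]
    have hIioIic : ∫ x in Set.Iio μl, Real.exp (-b * (x - μl) ^ 2) =
        ∫ x in Set.Iic μl, Real.exp (-b * (x - μl) ^ 2) := by
      apply setIntegral_congr_set Iio_ae_eq_Iic
    rw [hIioIic, gauss_shift_Iic, integral_gaussian_Ioi]
    have hsq : Real.sqrt (π / b) = Real.sqrt (2 * π) * σu := by
      rw [hb]
      rw [show π / (2 * σu ^ 2)⁻¹ = 2 * π * σu ^ 2 by field_simp]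
      rw [Real.sqrt_mul (by positivity), Real.sqrt_sq hσu.le]
    rw [hsq]
  -- bound on the right tail
  have bd3 : ∫⁻ x in Set.Ioi μu, F x ≤ ENNReal.ofReal (c * (Real.sqrt (2 * π) * σu / 2)) := by
    have hmono : ∫⁻ x in Set.Ioi μu, F x ≤
        ∫⁻ x in Set.Ioi μu, ENNReal.ofReal (c * Real.exp (-b * (x - μu) ^ 2)) := by
      apply setLIntegral_mono (by fun_prop)
      intro x hx
      apply key x ((x - μu) ^ 2) (sq_nonneg _)
      rintro μ σ hq
      have h1 : μ ≤ μu := hq.1.2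
      have hx' : μu < x := hx
      nlinarith
    refine hmono.trans ?_
    have hint : Integrable (fun x : ℝ => c * Real.exp (-b * (x - μu) ^ 2)) volume :=
      ((integrable_exp_neg_mul_sq hbpos).comp_sub_right μu).const_mul c
    rw [← ofReal_integral_eq_lintegral_ofReal hint.integrableOn
      (Filter.Eventually.of_forall fun x => by positivity)]
    apply ENNReal.ofReal_le_ofReal
    rw [MeasureTheory.integral_const_mul, gauss_shift_Ioi, integral_gaussian_Ioi]
    have hsq : Real.sqrt (π / b) = Real.sqrt (2 * π) * σu := by
      rw [hb]
      rw [show π / (2 * σu ^ 2)⁻¹ = 2 * π * σu ^ 2 by field_simp]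
      rw [Real.sqrt_mul (by positivity), Real.sqrt_sq hσu.le]
    rw [hsq]
  -- bound on the middle
  have bd2 : ∫⁻ x in Set.Icc μl μu, F x ≤ ENNReal.ofReal (c * (μu - μl)) := by
    have hmono : ∫⁻ x in Set.Icc μl μu, F x ≤
        ∫⁻ x in Set.Icc μl μu, ENNReal.ofReal c := by
      apply setLIntegral_mono measurable_const
      intro x hx
      have := key x 0 le_rfl (fun μ σ hq => sq_nonneg _)
      simpa using this
    refine hmono.trans ?_
    rw [setLIntegral_const, Real.volume_Icc, ← ENNReal.ofReal_mul hcpos.le]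
  -- combine
  rw [← split1, split2]
  have harith : c * (Real.sqrt (2 * π) * σu / 2) + (c * (μu - μl) +
      c * (Real.sqrt (2 * π) * σu / 2)) = (1 / σl) * (σu + (μu - μl) / Real.sqrt (2 * π)) := by
    rw [hc]
    field_simp
    ring
  calc (∫⁻ x in Set.Iio μl, F x) + ((∫⁻ x in Set.Icc μl μu, F x) + ∫⁻ x in Set.Ioi μu, F x)
      ≤ ENNReal.ofReal (c * (Real.sqrt (2 * π) * σu / 2)) +
        (ENNReal.ofReal (c * (μu - μl)) + ENNReal.ofReal (c * (Real.sqrt (2 * π) * σu / 2))) := by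
        gcongr
    _ = ENNReal.ofReal ((1 / σl) * (σu + (μu - μl) / Real.sqrt (2 * π))) := by
        have hA : (0:ℝ) ≤ c * (Real.sqrt (2 * π) * σu / 2) := by positivity
        have hB : (0:ℝ) ≤ c * (μu - μl) := mul_nonneg hcpos.le (sub_nonneg.mpr hμ)
        rw [← ENNReal.ofReal_add hB hA, ← ENNReal.ofReal_add hA (by linarith), harith]
end
end

section
/- No-consistency example, key combinatorial claim: for every positive integer n and every finite list of real numbers x₁, …, x_n, there exist a positive integer k and a binary sequence a = (a₁, …, a_{2k}) ∈ {0,1}^{2k} containing exactly k ones and k zeros, such that the map g := ∑_{ℓ=1}^{2k} a_ℓ · 1_{[(ℓ−1)/k, ℓ/k]} satisfies g(x_i) = 0 for every i ∈ {1, …, n}. Consequently, since every such map g is a probability density supported in [0,2] (it is nonnegative with Lebesgue integral 1), for every finite sample there is a density in the countable class D that vanishes at every sampled point, so the importance-sampling estimate inf over D of the weighted empirical mean of any map f > 0 equals 0, while the true lower expectation inf_{P∈𝒫_D} E^P(f) is strictly positive. -/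
/-!
A point `y` lies in `[ℓ/k, (ℓ+1)/k]` only for `ℓ ∈ {⌊k y⌋ - 1, ⌊k y⌋}`, so `n` sample points meet
at most `2n` of the `2k` intervals. For `k = 2n + 1` the `k` ones of `a` fit on intervals that
avoid every sample point, and then the weighted empirical mean vanishes.

Every density `g ∈ D` is bounded by `2`, supported in `[0,2]` and of mass `1`. Choosing `c > 0`
with `|{f < c} ∩ [0,2]| < 1/4`, the set `{f < c}` carries at most half of the mass of `g`, so
`∫ f g ≥ c / 2` uniformly over `D`.
-/

open MeasureTheory
open scoped ENNReal

noncomputable section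

/-- The step map `∑_{ℓ=1}^{2k} a_ℓ 1_{[(ℓ−1)/k, ℓ/k]}` determined by `k` and a sequence `a`
of length `2k` (indexed from `0` here). -/
def stepDensity (k : ℕ) (a : Fin (2 * k) → ℝ) : ℝ → ℝ := fun x =>
  ∑ ℓ : Fin (2 * k),
    a ℓ * Set.indicator (Set.Icc (((ℓ : ℕ) : ℝ) / k) ((((ℓ : ℕ) : ℝ) + 1) / k))
      (fun _ => (1 : ℝ)) x

/-- `a` is a binary sequence of even length `2k` (`k ≥ 1`) with the same number (`k`) of
zeroes and ones. -/
def IsBi (k : ℕ) (a : Fin (2 * k) → ℝ) : Prop :=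
  0 < k ∧ (∀ ℓ, a ℓ = 0 ∨ a ℓ = 1) ∧
    (Finset.univ.filter fun ℓ => a ℓ = 1).card = k

/-- The countable set `D` of step densities. -/
def stepDensitySet : Set (ℝ → ℝ) :=
  {g | ∃ k a, IsBi k a ∧ g = stepDensity k a}

/-- The density of the central uniform distribution on `[0,2]`. -/
def centralDensity : ℝ → ℝ :=
  Set.indicator (Set.Icc (0 : ℝ) 2) (fun _ => (1 / 2 : ℝ))

abbrev stepInterval (k ℓ : ℕ) : Set ℝ :=
  Set.Icc ((ℓ : ℝ) / k) (((ℓ : ℝ) + 1) / k)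

lemma stepDensity_apply (k : ℕ) (a : Fin (2 * k) → ℝ) (y : ℝ) :
    stepDensity k a y = ∑ ℓ : Fin (2 * k), a ℓ * (stepInterval k ℓ).indicator (fun _ => 1) y :=
  rfl

lemma stepInterval_subset_Icc {k ℓ : ℕ} (hℓ : ℓ < 2 * k) : stepInterval k ℓ ⊆ Set.Icc 0 2 := by
  have hk : (0 : ℝ) < k := by exact_mod_cast (by omega : 0 < k)
  have hℓ' : (ℓ : ℝ) + 1 ≤ 2 * k := by exact_mod_cast hℓ
  refine Set.Icc_subset_Icc (by positivity) ?_
  rw [div_le_iff₀ hk]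
  linarith

lemma card_filter_mem_stepInterval_le_two {k : ℕ} (hk : 0 < k) (m : ℕ) (y : ℝ) :
    (Finset.univ.filter fun ℓ : Fin m => y ∈ stepInterval k ℓ).card ≤ 2 := by
  have hkR : (0 : ℝ) < k := by exact_mod_cast hk
  calc _ ≤ ({⌊k * y⌋ - 1, ⌊k * y⌋} : Finset ℤ).card := by
        refine Finset.card_le_card_of_injOn (fun ℓ => ((ℓ : ℕ) : ℤ)) ?_
          (fun ℓ _ ℓ' _ h => Fin.ext (Int.ofNat_inj.1 h))
        intro ℓ hℓ
        simp only [Finset.coe_filter, Finset.mem_univ, true_and, Set.mem_ofPred_eq,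
          Set.mem_Icc, div_le_iff₀ hkR, le_div_iff₀ hkR] at hℓ
        have hle : ((ℓ : ℕ) : ℤ) ≤ ⌊k * y⌋ := Int.le_floor.2 (by push_cast; linarith)
        have hge : ⌊k * y⌋ < ((ℓ : ℕ) : ℤ) + 2 := Int.floor_lt.2 (by push_cast; linarith)
        simp only [Finset.coe_insert, Finset.coe_singleton, Set.mem_insert_iff,
          Set.mem_singleton_iff]
        omega
    _ ≤ 2 := Finset.card_le_two

lemma stepDensity_eq_zero_of_notMem_Icc (k : ℕ) (a : Fin (2 * k) → ℝ) {y : ℝ}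
    (hy : y ∉ Set.Icc (0 : ℝ) 2) : stepDensity k a y = 0 :=
  Finset.sum_eq_zero fun ℓ _ => by
    rw [Set.indicator_of_notMem (fun h => hy (stepInterval_subset_Icc ℓ.2 h)), mul_zero]

lemma stepDensity_eq_zero_of_forall {k : ℕ} {a : Fin (2 * k) → ℝ} {y : ℝ}
    (h : ∀ ℓ : Fin (2 * k), a ℓ ≠ 0 → y ∉ stepInterval k ℓ) : stepDensity k a y = 0 := by
  refine Finset.sum_eq_zero fun ℓ _ => ?_
  by_cases hℓ : a ℓ = 0
  · rw [hℓ, zero_mul]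
  · rw [Set.indicator_of_notMem (h ℓ hℓ), mul_zero]

lemma stepDensity_le_two {k : ℕ} (hk : 0 < k) {a : Fin (2 * k) → ℝ} (ha : ∀ ℓ, a ℓ ≤ 1)
    (y : ℝ) : stepDensity k a y ≤ 2 :=
  calc stepDensity k a y ≤ ∑ ℓ : Fin (2 * k), (stepInterval k ℓ).indicator (fun _ => 1) y :=
        Finset.sum_le_sum fun ℓ _ =>
          mul_le_of_le_one_left (Set.indicator_nonneg (fun _ _ => zero_le_one) y) (ha ℓ)
    _ = (Finset.univ.filter fun ℓ : Fin (2 * k) => y ∈ stepInterval k ℓ).card := by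
        simp only [Set.indicator_apply, Finset.sum_boole]
    _ ≤ 2 := by exact_mod_cast card_filter_mem_stepInterval_le_two hk _ y

lemma integrable_const_mul_indicator_stepInterval (k ℓ : ℕ) (c : ℝ) :
    Integrable fun y => c * (stepInterval k ℓ).indicator (fun _ => 1) y :=
  ((integrable_indicator_iff measurableSet_Icc).2
    (integrableOn_const measure_Icc_lt_top.ne)).const_mul c

lemma integrable_stepDensity (k : ℕ) (a : Fin (2 * k) → ℝ) : Integrable (stepDensity k a) :=
  integrable_finsetSum _ fun ℓ _ => integrable_const_mul_indicator_stepInterval k ℓ (a ℓ)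

namespace IsBi

variable {k : ℕ} {a : Fin (2 * k) → ℝ}

lemma nonneg (h : IsBi k a) (ℓ : Fin (2 * k)) : 0 ≤ a ℓ := by
  rcases h.2.1 ℓ with h | h <;> simp [h]

lemma le_one (h : IsBi k a) (ℓ : Fin (2 * k)) : a ℓ ≤ 1 := by
  rcases h.2.1 ℓ with h | h <;> simp [h]

lemma sum_eq (h : IsBi k a) : ∑ ℓ, a ℓ = k := by
  have ha : ∀ ℓ, a ℓ = if a ℓ = 1 then 1 else 0 := fun ℓ => by
    rcases h.2.1 ℓ with h | h <;> simp [h]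
  rw [Finset.sum_congr rfl fun ℓ _ => ha ℓ, Finset.sum_boole, h.2.2]

lemma stepDensity_nonneg (h : IsBi k a) (y : ℝ) : 0 ≤ stepDensity k a y :=
  Finset.sum_nonneg fun ℓ _ =>
    mul_nonneg (h.nonneg ℓ) (Set.indicator_nonneg (fun _ _ => zero_le_one) y)

lemma integral_stepDensity (h : IsBi k a) : ∫ y, stepDensity k a y = 1 := by
  have hk : (k : ℝ) ≠ 0 := by exact_mod_cast h.1.ne'
  have hint : ∀ ℓ : Fin (2 * k), ∫ y, a ℓ * (stepInterval k ℓ).indicator (fun _ => 1) y = a ℓ / k :=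
    fun ℓ => by
      rw [integral_const_mul, integral_indicator_const _ measurableSet_Icc, Real.volume_real_Icc,
        ← sub_div, add_sub_cancel_left, max_eq_left (by positivity), smul_eq_mul, mul_one,
        mul_one_div]
  simp_rw [stepDensity_apply]
  rw [integral_finsetSum _ fun (ℓ : Fin (2 * k)) _ =>
      integrable_const_mul_indicator_stepInterval k ℓ (a ℓ),
    Finset.sum_congr rfl fun ℓ _ => hint ℓ, ← Finset.sum_div, h.sum_eq, div_self hk]

lemma lintegral_stepDensity (h : IsBi k a) : ∫⁻ y, ENNReal.ofReal (stepDensity k a y) = 1 := by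
  rw [← ofReal_integral_eq_lintegral_ofReal (integrable_stepDensity k a)
    (ae_of_all _ h.stepDensity_nonneg), h.integral_stepDensity, ENNReal.ofReal_one]

end IsBi

lemma isBi_indicator {k : ℕ} (hk : 0 < k) {t : Finset (Fin (2 * k))} (ht : t.card = k) :
    IsBi k fun ℓ => if ℓ ∈ t then 1 else 0 := by
  refine ⟨hk, fun ℓ => by by_cases hℓ : ℓ ∈ t <;> simp [hℓ], ?_⟩
  convert ht using 2
  ext ℓ
  by_cases hℓ : ℓ ∈ t <;> simp [hℓ]

theorem exists_isBi_stepDensity_eq_zero {n : ℕ} (x : Fin n → ℝ) :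
    ∃ (k : ℕ) (a : Fin (2 * k) → ℝ), IsBi k a ∧ ∀ i, stepDensity k a (x i) = 0 := by
  set k := 2 * n + 1
  have hk : 0 < k := by omega
  let hit : Finset (Fin (2 * k)) := Finset.univ.biUnion fun i =>
    Finset.univ.filter fun ℓ : Fin (2 * k) => x i ∈ stepInterval k ℓ
  have hit_card : hit.card ≤ 2 * n :=
    calc hit.card ≤ ∑ i : Fin n, 2 :=
          Finset.card_biUnion_le.trans <| Finset.sum_le_sum fun i _ =>
            card_filter_mem_stepInterval_le_two hk _ (x i)
      _ = 2 * n := by simp [mul_comm]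
  obtain ⟨t, ht_sub, ht_card⟩ : ∃ t ⊆ hitᶜ, t.card = k :=
    Finset.exists_subset_card_eq (by rw [Finset.card_compl, Fintype.card_fin]; omega)
  refine ⟨k, _, isBi_indicator hk ht_card, fun i => stepDensity_eq_zero_of_forall ?_⟩
  intro ℓ hℓ hx
  have hℓt : ℓ ∈ t := by by_contra h; simp [h] at hℓ
  exact Finset.mem_compl.1 (ht_sub hℓt) <|
    Finset.mem_biUnion.2 ⟨i, Finset.mem_univ _, Finset.mem_filter.2 ⟨Finset.mem_univ _, hx⟩⟩

section LowerBound

variable {α : Type*} [MeasurableSpace α] (μ : Measure α)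

lemma exists_pos_measure_inter_setOf_lt_lt {f : α → ℝ} (hf : Measurable f)
    (hpos : ∀ y, 0 < f y) {s : Set α} (hs : MeasurableSet s) (hμs : μ s ≠ ∞) {ε : ℝ≥0∞}
    (hε : 0 < ε) : ∃ c : ℝ, 0 < c ∧ μ (s ∩ {y | f y < c}) < ε := by
  let S : ℕ → Set α := fun m => s ∩ {y | f y < 1 / (m + 1)}
  have hS_anti : Antitone S := fun m m' hm => Set.inter_subset_inter_right _ fun y hy =>
    show f y < 1 / ((m : ℝ) + 1) from hy.trans_le (by gcongr)
  have hS_empty : ⋂ m, S m = ∅ := Set.eq_empty_of_forall_notMem fun y hy => by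
    obtain ⟨m, hm⟩ := exists_nat_one_div_lt (hpos y)
    exact (Set.mem_iInter.1 hy m).2.not_gt hm
  have hS_tendsto : Filter.Tendsto (μ ∘ S) Filter.atTop (nhds 0) := by
    rw [← measure_empty (μ := μ), ← hS_empty]
    exact tendsto_measure_iInter_atTop
      (fun m => (hs.inter (measurableSet_lt hf measurable_const)).nullMeasurableSet) hS_anti
      ⟨0, measure_ne_top_of_subset Set.inter_subset_left hμs⟩
  obtain ⟨m, hm⟩ := (hS_tendsto.eventually (gt_mem_nhds hε)).exists
  exact ⟨1 / (m + 1), by positivity, hm⟩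

lemma lintegral_ofReal_le_add {f g : α → ℝ} {s : Set α} {M c : ℝ} (hf : Measurable f)
    (hs : MeasurableSet s) (hc : 0 < c) (hgM : ∀ y, g y ≤ M) (hgs : ∀ y ∉ s, g y = 0) :
    ∫⁻ y, ENNReal.ofReal (g y) ∂μ ≤
      ENNReal.ofReal M * μ (s ∩ {y | f y < c}) +
        (ENNReal.ofReal c)⁻¹ * ∫⁻ y, ENNReal.ofReal (f y * g y) ∂μ := by
  have hc' : ENNReal.ofReal c ≠ 0 := (ENNReal.ofReal_pos.2 hc).ne'
  have hS : MeasurableSet (s ∩ {y | f y < c}) := hs.inter (measurableSet_lt hf measurable_const)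
  calc ∫⁻ y, ENNReal.ofReal (g y) ∂μ
      ≤ ∫⁻ y, ENNReal.ofReal M * (s ∩ {y | f y < c}).indicator 1 y +
          (ENNReal.ofReal c)⁻¹ * ENNReal.ofReal (f y * g y) ∂μ := by
        refine lintegral_mono fun y => ?_
        by_cases hys : y ∈ s
        · by_cases hfy : f y < c
          · rw [Set.indicator_of_mem (show y ∈ s ∩ {y | f y < c} from ⟨hys, hfy⟩), Pi.one_apply,
              mul_one]
            exact le_add_right (ENNReal.ofReal_le_ofReal (hgM y))
          · have hcf : ENNReal.ofReal c ≤ ENNReal.ofReal (f y) :=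
              ENNReal.ofReal_le_ofReal (not_lt.1 hfy)
            refine le_add_left ?_
            rw [ENNReal.ofReal_mul (hc.trans_le (not_lt.1 hfy)).le, ← mul_assoc]
            calc ENNReal.ofReal (g y)
                = (ENNReal.ofReal c)⁻¹ * ENNReal.ofReal c * ENNReal.ofReal (g y) := by
                  rw [ENNReal.inv_mul_cancel hc' ENNReal.ofReal_ne_top, one_mul]
              _ ≤ _ := by gcongr
        · simp [hgs y hys]
    _ = _ := by
        rw [lintegral_add_left ((measurable_one.indicator hS).const_mul _),
          lintegral_const_mul' _ _ ENNReal.ofReal_ne_top, lintegral_indicator_one hS,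
          lintegral_const_mul' _ _ (ENNReal.inv_ne_top.2 hc')]

end LowerBound

theorem exists_pos_le_lintegral_mul_stepDensity {f : ℝ → ℝ} (hf : Measurable f)
    (hpos : ∀ y, 0 < f y) :
    ∃ ε : ℝ≥0∞, 0 < ε ∧ ∀ k (a : Fin (2 * k) → ℝ), IsBi k a →
      ε ≤ ∫⁻ y, ENNReal.ofReal (f y * stepDensity k a y) := by
  obtain ⟨c, hc, hS⟩ := exists_pos_measure_inter_setOf_lt_lt volume hf hpos
    (measurableSet_Icc (a := 0) (b := 2)) measure_Icc_lt_top.ne (ε := 2⁻¹ / 2) (by simp)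
  have hS' : ENNReal.ofReal 2 * volume (Set.Icc 0 2 ∩ {y | f y < c}) ≤ 2⁻¹ := by
    rw [ENNReal.ofReal_ofNat, mul_comm]
    exact ((ENNReal.lt_div_iff_mul_lt (by simp) (by simp)).1 hS).le
  refine ⟨ENNReal.ofReal c * 2⁻¹, by simpa using hc, fun k a h => ?_⟩
  have key := lintegral_ofReal_le_add volume hf measurableSet_Icc hc
    (stepDensity_le_two h.1 h.le_one) (fun y => stepDensity_eq_zero_of_notMem_Icc k a)
  rw [h.lintegral_stepDensity] at key
  have hc0 : ENNReal.ofReal c ≠ 0 := (ENNReal.ofReal_pos.2 hc).ne'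
  rw [ENNReal.mul_le_iff_le_inv hc0 ENNReal.ofReal_ne_top, ← ENNReal.one_sub_inv_two,
    tsub_le_iff_left]
  exact key.trans (add_le_add_left hS' _)

/-- **No consistency.** Every member of `D` is a probability density supported
in `[0,2]`; for every finite sample `x₁, …, x_n` there are `k` and a binary sequence
`a ∈ Bi` whose step density vanishes at all sampled points; consequently, for every
Borel measurable `f > 0`, the importance-sampling estimate `inf_{g∈D}` of the weighted
empirical mean is `0`, while the true lower expectation `inf_{g∈D} ∫ f·g` is strictly
positive. -/
theorem no_consistency_example :
    (∀ (k : ℕ) (a : Fin (2 * k) → ℝ), IsBi k a →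
      (∀ y, 0 ≤ stepDensity k a y) ∧
      (∀ y, y ∉ Set.Icc (0 : ℝ) 2 → stepDensity k a y = 0) ∧
      ∫⁻ y, ENNReal.ofReal (stepDensity k a y) = 1) ∧
    ∀ n : ℕ, 0 < n → ∀ x : Fin n → ℝ,
      (∃ (k : ℕ) (a : Fin (2 * k) → ℝ), IsBi k a ∧
        ∀ i, stepDensity k a (x i) = 0) ∧
      (∀ f : ℝ → ℝ, Measurable f → (∀ y, 0 < f y) →
        (⨅ g : stepDensitySet,
          (n : ℝ)⁻¹ * ∑ i, f (x i) * g.1 (x i) / centralDensity (x i)) = 0 ∧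
        0 < ⨅ g : stepDensitySet, ∫⁻ y, ENNReal.ofReal (f y * g.1 y)) := by
  refine ⟨fun k a h => ⟨h.stepDensity_nonneg, fun y => stepDensity_eq_zero_of_notMem_Icc k a,
    h.lintegral_stepDensity⟩, fun n _ x => ⟨exists_isBi_stepDensity_eq_zero x, fun f hf hpos => ?_⟩⟩
  constructor
  · obtain ⟨k, a, h, hx⟩ := exists_isBi_stepDensity_eq_zero x
    let g₀ : stepDensitySet := ⟨stepDensity k a, k, a, h, rfl⟩
    have : Nonempty stepDensitySet := ⟨g₀⟩
    refine IsGLB.ciInf_eq (IsLeast.isGLB ⟨⟨g₀, by simp [g₀, hx]⟩, ?_⟩)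
    rintro _ ⟨⟨_, k', a', h', rfl⟩, rfl⟩
    refine mul_nonneg (by positivity) (Finset.sum_nonneg fun i _ => div_nonneg
      (mul_nonneg (hpos _).le (h'.stepDensity_nonneg _)) ?_)
    exact Set.indicator_nonneg (fun _ _ => by norm_num) _
  · obtain ⟨ε, hε, hε_le⟩ := exists_pos_le_lintegral_mul_stepDensity hf hpos
    exact hε.trans_le (le_iInf fun ⟨_, k, a, h, hg⟩ => hg ▸ hε_le k a h)
end
end
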